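/- arXiv:2603.18017 — 2 statements merged into one kernel-verified Lean document; each statement's English description precedes it below -/
import Mathlib

section
/- If a_j ≥ 0 are uniformly bounded, the sequence (a_j) has sublinear total variation Σ_{j=1}^{n−1}|a_{j+1}−a_j| = o(n), and θ is not an integer multiple of π, then Σ_{j=1}^n a_j e^{2jθi} = o(n) as n → ∞. -/
/-!
With `z = e^{2iθ}` we have `|z| = 1` and `z ≠ 1`, so the partial sums of `z^j` are bounded by
`2 / |z - 1| = 1 / |sin θ|`. Abel summation bounds `|∑ a_j z^j|` by this constant times
`|a_n| + |a_1| + V_n`, where `V_n` is the total variation, and `|a_n| ≤ |a_1| + V_n`; hence the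
sum is `O(1 + V_n) = o(n)`.
-/

open Filter Finset

noncomputable def variation {E : Type*} [SeminormedAddCommGroup E] (a : ℕ → E) (n : ℕ) : ℝ :=
  ∑ j ∈ Icc 1 (n - 1), ‖a (j + 1) - a j‖

theorem norm_sub_le_variation {E : Type*} [SeminormedAddCommGroup E] (a : ℕ → E) {n : ℕ}
    (hn : 1 ≤ n) : ‖a n - a 1‖ ≤ variation a n := by
  have hIcc : Icc 1 (n - 1) = Ico 1 n :=
    Icc_sub_one_right_eq_Ico_of_not_isMin
      (not_isMin_iff_ne_bot.mpr (Nat.one_le_iff_ne_zero.mp hn)) 1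
  rw [variation, hIcc, ← sum_Ico_sub a hn]
  exact norm_sum_le _ _

section Abel

variable {𝕜 E : Type*} [NormedField 𝕜] [SeminormedAddCommGroup E] [NormedSpace 𝕜 E]

theorem norm_sum_Icc_smul_le (a : ℕ → 𝕜) (f : ℕ → E) {M : ℝ}
    (hM : ∀ k, ‖∑ j ∈ range k, f j‖ ≤ M) (n : ℕ) :
    ‖∑ j ∈ Icc 1 n, a j • f j‖ ≤ M * (‖a n‖ + ‖a 1‖ + variation a n) := by
  have hM0 : 0 ≤ M := by simpa using hM 0
  rcases Nat.eq_zero_or_pos n with rfl | hn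
  · simp only [variation, zero_tsub, Order.lt_one_iff, Icc_eq_empty_of_lt, sum_empty, norm_zero,
      add_zero]
    positivity
  have hterm (c : 𝕜) (k : ℕ) : ‖c • ∑ j ∈ range k, f j‖ ≤ M * ‖c‖ := by
    rw [norm_smul, mul_comm]
    exact mul_le_mul_of_nonneg_right (hM k) (norm_nonneg c)
  have hIoc (m : ℕ) : Icc 1 m = Ioc 0 m := Icc_add_one_left_eq_Ioc 0 m
  rw [hIoc, sum_Ioc_by_parts a f hn, variation, hIoc, mul_add, mul_add, mul_sum]
  refine (norm_sub_le _ _).trans (add_le_add ((norm_sub_le _ _).trans ?_) ?_)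
  · exact add_le_add (hterm _ _) (hterm _ _)
  · exact (norm_sum_le _ _).trans (sum_le_sum fun i _ => hterm _ _)

theorem tendsto_norm_sum_Icc_smul_div_atTop (a : ℕ → 𝕜) (f : ℕ → E) {M : ℝ}
    (hM : ∀ k, ‖∑ j ∈ range k, f j‖ ≤ M)
    (hV : Tendsto (fun n : ℕ => variation a n / n) atTop (nhds 0)) :
    Tendsto (fun n : ℕ => ‖∑ j ∈ Icc 1 n, a j • f j‖ / n) atTop (nhds 0) := by
  have hM0 : 0 ≤ M := by simpa using hM 0
  have hbound : Tendsto (fun n : ℕ => 2 * M * ‖a 1‖ / n + 2 * M * (variation a n / n))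
      atTop (nhds 0) := by
    simpa using (tendsto_const_div_atTop_nhds_zero_nat _).add (hV.const_mul (2 * M))
  refine squeeze_zero' (Eventually.of_forall fun n => by positivity) ?_ hbound
  filter_upwards [eventually_ge_atTop 1] with n hn
  have ha : ‖a n‖ ≤ ‖a 1‖ + variation a n :=
    (norm_le_norm_add_norm_sub' _ _).trans (by gcongr; exact norm_sub_le_variation a hn)
  rw [mul_div_assoc', ← add_div]
  gcongr
  calc ‖∑ j ∈ Icc 1 n, a j • f j‖ ≤ M * (‖a n‖ + ‖a 1‖ + variation a n) :=
        norm_sum_Icc_smul_le a f hM n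
    _ ≤ M * (2 * ‖a 1‖ + 2 * variation a n) := mul_le_mul_of_nonneg_left (by linarith) hM0
    _ = 2 * M * ‖a 1‖ + 2 * M * variation a n := by ring

end Abel

theorem norm_geom_sum_le {𝕜 : Type*} [NormedDivisionRing 𝕜] {z : 𝕜} (hz : ‖z‖ ≤ 1)
    (hz1 : z ≠ 1) (k : ℕ) : ‖∑ j ∈ range k, z ^ j‖ ≤ 2 / ‖z - 1‖ := by
  rw [geom_sum_eq hz1, norm_div]
  gcongr
  calc ‖z ^ k - 1‖ ≤ ‖z‖ ^ k + ‖(1 : 𝕜)‖ := by rw [← norm_pow]; exact norm_sub_le _ _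
    _ ≤ 2 := by rw [norm_one]; linarith [pow_le_one₀ (n := k) (norm_nonneg z) hz]

theorem Complex.exp_two_mul_mul_I_ne_one {θ : ℝ} (hθ : ∀ k : ℤ, θ ≠ k * Real.pi) :
    Complex.exp (2 * θ * Complex.I) ≠ 1 := by
  rw [Ne, Complex.exp_eq_one_iff]
  rintro ⟨k, hk⟩
  have h2I : 2 * Complex.I ≠ 0 := mul_ne_zero two_ne_zero Complex.I_ne_zero
  exact hθ k <| by
    exact_mod_cast mul_right_cancel₀ h2I (by linear_combination hk :
      (θ : ℂ) * (2 * Complex.I) = k * Real.pi * (2 * Complex.I))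

theorem oscillatory_sum_sublinear_general (a : ℕ → ℝ)
    (hTV : Tendsto
      (fun n : ℕ => (∑ j ∈ Finset.Icc 1 (n - 1), |a (j + 1) - a j|) / n)
      atTop (nhds 0))
    (θ : ℝ) (hθ : ∀ k : ℤ, θ ≠ k * Real.pi) :
    Tendsto
      (fun n : ℕ =>
        ‖∑ j ∈ Finset.Icc 1 n,
          (a j : ℂ) * Complex.exp (2 * j * θ * Complex.I)‖ / n)
      atTop (nhds 0) := by
  set z := Complex.exp (2 * θ * Complex.I)
  have hz : ‖z‖ = 1 := by simpa using Complex.norm_exp_ofReal_mul_I (2 * θ)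
  have hsum (n : ℕ) : ∑ j ∈ Icc 1 n, (a j : ℂ) * Complex.exp (2 * j * θ * Complex.I) =
      ∑ j ∈ Icc 1 n, a j • z ^ j :=
    sum_congr rfl fun j _ => by rw [Complex.real_smul, ← Complex.exp_nat_mul]; ring_nf
  have hV : Tendsto (fun n : ℕ => variation a n / n) atTop (nhds 0) := by
    simpa only [variation, Real.norm_eq_abs] using hTV
  simpa only [hsum] using tendsto_norm_sum_Icc_smul_div_atTop a (z ^ ·)
    (norm_geom_sum_le hz.le (Complex.exp_two_mul_mul_I_ne_one hθ)) hV

/-- If `a_j ≥ 0` are uniformly bounded, have sublinear total variation, and `θ`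
is not an integer multiple of `π`, then `∑_{j=1}^n a_j e^{2jθi} = o(n)`. -/
theorem oscillatory_sum_sublinear (a : ℕ → ℝ) (ha : ∀ j, 0 ≤ a j)
    (C : ℝ) (hC : ∀ j, a j ≤ C)
    (hTV : Tendsto
      (fun n : ℕ => (∑ j ∈ Finset.Icc 1 (n - 1), |a (j + 1) - a j|) / n)
      atTop (nhds 0))
    (θ : ℝ) (hθ : ∀ k : ℤ, θ ≠ k * Real.pi) :
    Tendsto
      (fun n : ℕ =>
        ‖∑ j ∈ Finset.Icc 1 n,
          (a j : ℂ) * Complex.exp (2 * j * θ * Complex.I)‖ / n)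
      atTop (nhds 0) :=
  oscillatory_sum_sublinear_general a hTV θ hθ
end

section
/- Suppose X = u v^T with ||v||_2 = 1, each u_j = Θ(1) bounded above and below by positive constants, Σ_{j=1}^{n−1}|u_{j+1}^2 − u_j^2| = o(n), and all angles θ_k, (θ_k ± θ_l)/2 (k ≠ l) are irrational multiples of π. Then ||R(X)||_2 / ||X||_2 → (1/√2)·max_{1≤k≤d/2} α_k as n → ∞, where α_k is the norm of the k-th 2D subvector of v. -/
/-!
Write `G_n = R(X)ᵀ R(X)` and `S_n = ∑ u_j² = ‖X‖₂²`, so that the ratio is `√(‖G_n‖ / S_n)`.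
Identifying each 2-dimensional block with `ℂ`, RoPE multiplies block `k` of row `j` by
`exp (i j θ_k)`, so every entry of `G_n` is a combination of the sums `∑ u_j² exp (i j φ)`
with `φ = θ_k ± θ_l`. For `φ = 0`, which occurs only in the diagonal blocks, the sum is `S_n`
and yields `½ Diag(α_k² I₂)`. For every other `φ` irrationality gives `exp (i φ) ≠ 1`; Abel
summation against the bounded geometric partial sums, with the sublinear variation of `u_j²`,
makes the sum `o(n)`. As `S_n ≥ c₁² n`, `G_n / S_n → ½ Diag(α_k² I₂)`, whose spectral norm
is `max_k α_k² / 2`.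
-/

open scoped BigOperators
open Matrix Filter

noncomputable def eNorm {ι : Type*} [Fintype ι] (v : ι → ℝ) : ℝ :=
  Real.sqrt (∑ i, (v i) ^ 2)

noncomputable def specNorm {ι κ : Type*} [Fintype ι] [Fintype κ]
    (X : Matrix ι κ ℝ) : ℝ :=
  sSup {c : ℝ | ∃ v : κ → ℝ, eNorm v = 1 ∧ c = eNorm (X.mulVec v)}

noncomputable def rot2 (φ : ℝ) : Matrix (Fin 2) (Fin 2) ℝ :=
  !![Real.cos φ, -Real.sin φ; Real.sin φ, Real.cos φ]

noncomputable def blockRot {m : ℕ} (φ : Fin m → ℝ) :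
    Matrix (Fin m × Fin 2) (Fin m × Fin 2) ℝ :=
  fun p q => if p.1 = q.1 then rot2 (φ p.1) p.2 q.2 else 0

noncomputable def ropeRot {m : ℕ} (θ : Fin m → ℝ) (j : ℕ) :
    Matrix (Fin m × Fin 2) (Fin m × Fin 2) ℝ :=
  blockRot (fun k => (j : ℝ) * θ k)

/-- RoPE applied row-wise to the rank-one matrix whose `j`-th row (position
`j = 1,…,n`) is `u_j v`. -/
noncomputable def ropeRankOne {n m : ℕ} (θ : Fin m → ℝ)
    (u : ℕ → ℝ) (v : Fin m × Fin 2 → ℝ) :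
    Matrix (Fin n) (Fin m × Fin 2) ℝ :=
  fun j => (ropeRot θ ((j : ℕ) + 1)).mulVec (u ((j : ℕ) + 1) • v)

open scoped Matrix.Norms.L2Operator ComplexConjugate Topology
open Complex Asymptotics Finset

lemma eNorm_eq_norm_toLp {ι : Type*} [Fintype ι] (x : ι → ℝ) :
    eNorm x = ‖WithLp.toLp 2 x‖ := by
  simp [eNorm, EuclideanSpace.norm_eq]

lemma specNorm_eq_l2_opNorm {ι κ : Type*} [Fintype ι] [Fintype κ] [DecidableEq κ]
    (X : Matrix ι κ ℝ) : specNorm X = ‖X‖ := by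
  rw [l2_opNorm_def, ← ContinuousLinearMap.sSup_sphere_eq_norm, specNorm]
  congr 1
  ext c
  simp only [Set.mem_ofPred_eq, Set.mem_image, mem_sphere_iff_norm, sub_zero]
  constructor
  · rintro ⟨x, hx, rfl⟩
    exact ⟨WithLp.toLp 2 x, by rwa [← eNorm_eq_norm_toLp], by rw [eNorm_eq_norm_toLp]; rfl⟩
  · rintro ⟨x, hx, rfl⟩
    exact ⟨x.ofLp, by rwa [eNorm_eq_norm_toLp], by rw [eNorm_eq_norm_toLp]; rfl⟩

lemma l2_opNorm_vecMulVec {ι κ : Type*} [Fintype ι] [Fintype κ] [DecidableEq κ]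
    (a : ι → ℝ) (b : κ → ℝ) :
    ‖vecMulVec a b‖ = ‖WithLp.toLp 2 a‖ * ‖WithLp.toLp 2 b‖ := by
  have := InnerProductSpace.symm_toEuclideanLin_rankOne (𝕜 := ℝ) (WithLp.toLp 2 a)
    (WithLp.toLp 2 b)
  simp only [star_trivial] at this
  rw [← this, l2_opNorm_def, LinearEquiv.trans_apply, LinearEquiv.apply_symm_apply,
    ← InnerProductSpace.norm_rankOne (𝕜 := ℝ)]
  exact congrArg norm (ContinuousLinearMap.ext fun _ => rfl)

lemma l2_opNorm_eq_sqrt_norm_transpose_mul_self {ι κ : Type*} [Fintype ι] [Fintype κ]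
    [DecidableEq κ] (A : Matrix ι κ ℝ) : ‖A‖ = √‖Aᵀ * A‖ := by
  rw [← conjTranspose_eq_transpose_of_trivial, l2_opNorm_conjTranspose_mul_self,
    Real.sqrt_mul_self (norm_nonneg A)]

lemma norm_sum_range_pow_succ_le {z : ℂ} (hz : ‖z‖ = 1) (h1 : z ≠ 1) (n : ℕ) :
    ‖∑ j ∈ range n, z ^ (j + 1)‖ ≤ 2 / ‖z - 1‖ := by
  have hz1 : 0 < ‖z - 1‖ := norm_pos_iff.mpr (sub_ne_zero.mpr h1)
  have hgeom : ∑ j ∈ range n, z ^ (j + 1) = z * ((z ^ n - 1) / (z - 1)) := by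
    simp only [← geom_sum_eq h1, mul_sum, pow_succ']
  rw [hgeom, norm_mul, hz, one_mul, norm_div, div_le_div_iff_of_pos_right hz1]
  calc ‖z ^ n - 1‖ ≤ ‖z ^ n‖ + ‖(1 : ℂ)‖ := norm_sub_le _ _
    _ = 2 := by norm_num [norm_pow, hz]

lemma norm_sum_mul_le_of_norm_partial_sum_le (b : ℕ → ℝ) (g : ℕ → ℂ) {C K : ℝ}
    (hb : ∀ i, |b i| ≤ C) (hg : ∀ N, ‖∑ i ∈ range N, g i‖ ≤ K) (n : ℕ) :
    ‖∑ i ∈ range n, (b i : ℂ) * g i‖ ≤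
      C * K + ∑ i ∈ range (n - 1), |b (i + 1) - b i| * K := by
  have h := sum_range_by_parts (fun i => (b i : ℂ)) g n
  simp only [smul_eq_mul] at h
  rw [h]
  refine (norm_sub_le _ _).trans (add_le_add ?_ ?_)
  · rw [norm_mul, Complex.norm_real, Real.norm_eq_abs]
    exact mul_le_mul (hb _) (hg _) (norm_nonneg _) ((abs_nonneg _).trans (hb 0))
  · refine (norm_sum_le _ _).trans (sum_le_sum fun i _ => ?_)
    rw [norm_mul, ← Complex.ofReal_sub, Complex.norm_real, Real.norm_eq_abs]
    exact mul_le_mul_of_nonneg_left (hg _) (abs_nonneg _)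

noncomputable def weightedPowSum (a : ℕ → ℝ) (z : ℂ) (n : ℕ) : ℂ :=
  ∑ j ∈ range n, (a (j + 1) : ℂ) * z ^ (j + 1)

lemma weightedPowSum_isLittleO {a : ℕ → ℝ} {C : ℝ} (ha : ∀ j, |a j| ≤ C)
    (hvar : Tendsto (fun n : ℕ => (∑ j ∈ Icc 1 (n - 1), |a (j + 1) - a j|) / n)
      atTop (𝓝 0))
    {z : ℂ} (hz : ‖z‖ = 1) (h1 : z ≠ 1) :
    weightedPowSum a z =o[atTop] (fun n : ℕ => (n : ℝ)) := by
  have hbound : ∀ n, ‖weightedPowSum a z n‖ ≤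
      2 / ‖z - 1‖ * C + 2 / ‖z - 1‖ * ∑ j ∈ Icc 1 (n - 1), |a (j + 1) - a j| := by
    intro n
    refine (norm_sum_mul_le_of_norm_partial_sum_le (fun i => a (i + 1)) (fun i => z ^ (i + 1))
      (fun i => ha (i + 1)) (norm_sum_range_pow_succ_le hz h1) n).trans_eq ?_
    rcases n with _ | n
    · simp [mul_comm]
    · rw [mul_comm C, ← Ico_add_one_right_eq_Icc, sum_Ico_eq_sum_range, mul_sum]
      simp [add_comm, mul_comm]
  have hconst : (fun _ : ℕ => 2 / ‖z - 1‖ * C) =o[atTop] (fun n : ℕ => (n : ℝ)) :=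
    (isLittleO_const_id_atTop _).comp_tendsto tendsto_natCast_atTop_atTop
  have hvar' : (fun n : ℕ => ∑ j ∈ Icc 1 (n - 1), |a (j + 1) - a j|) =o[atTop]
      (fun n : ℕ => (n : ℝ)) :=
    isLittleO_of_tendsto (fun n hn => by simp [Nat.cast_eq_zero.mp hn]) hvar
  exact (isBigO_of_le _ fun n => (hbound n).trans (le_abs_self _)).trans_isLittleO
    (hconst.add (hvar'.const_mul_left _))

lemma weightedPowSum_one (a : ℕ → ℝ) (n : ℕ) :
    weightedPowSum a 1 n = ((∑ j ∈ range n, a (j + 1) : ℝ) : ℂ) := by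
  simp [weightedPowSum]

lemma isLittleO_re_const_mul {α : Type*} {l : Filter α} {f : α → ℂ} {g : α → ℝ}
    (h : f =o[l] g) (c : ℂ) : (fun x => (c * f x).re) =o[l] g :=
  (isBigO_of_le _ fun x => by simpa using abs_re_le_norm (c * f x)).trans_isLittleO
    (h.const_mul_left c)

lemma exp_mul_I_ne_one_of_irrational {φ : ℝ} (h : Irrational (φ / 2 / Real.pi)) :
    exp (φ * I) ≠ 1 := by
  rw [Ne, exp_eq_one_iff]
  rintro ⟨q, hq⟩
  have hφ : φ = q * 2 * Real.pi := ofReal_injective <| by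
    push_cast
    exact mul_right_cancel₀ I_ne_zero (hq.trans (by ring))
  exact h.ne_int q (by rw [hφ]; field_simp)

lemma re_mul_re (a b : ℂ) : a.re * b.re = ((a * b).re + (a * conj b).re) / 2 := by
  simp only [mul_re, conj_re, conj_im]
  ring

lemma sum_mul_re_mul_re (a : ℕ → ℝ) (c d ζ η : ℂ) (n : ℕ) :
    ∑ j ∈ range n, a (j + 1) * ((c * ζ ^ (j + 1)).re * (d * η ^ (j + 1)).re) =
      ((c * d * weightedPowSum a (ζ * η) n).re +
        (c * conj d * weightedPowSum a (ζ * conj η) n).re) / 2 := by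
  simp only [weightedPowSum, mul_sum, re_sum, ← sum_add_distrib, sum_div]
  refine sum_congr rfl fun j _ => ?_
  rw [re_mul_re, map_mul, map_pow, mul_div_assoc', mul_add, ← re_ofReal_mul, ← re_ofReal_mul]
  congr 3 <;> ring

/-- `(coordWeight s * z).re` is the `s`-th real coordinate of `z`, so that both coordinates of a
rotated vector are real parts of one complex product. -/
def coordWeight : Fin 2 → ℂ := ![1, -I]

lemma re_coordWeight_mul_conj (z : ℂ) (s t : Fin 2) :
    (coordWeight s * z * conj (coordWeight t * z)).re = if s = t then normSq z else 0 := by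
  rw [map_mul, mul_mul_mul_comm, mul_conj]
  fin_cases s <;> fin_cases t <;> simp [coordWeight]

lemma rot2_mulVec_apply (φ : ℝ) (x : Fin 2 → ℝ) (s : Fin 2) :
    (rot2 φ *ᵥ x) s = (coordWeight s * ⟨x 0, x 1⟩ * exp (φ * I)).re := by
  rw [exp_mul_I]
  fin_cases s <;> simp [rot2, coordWeight, mulVec, dotProduct, Fin.sum_univ_two, cos_ofReal_re,
    sin_ofReal_re, mul_comm, sub_eq_add_neg, add_comm]

lemma blockRot_mulVec_apply {m : ℕ} (φ : Fin m → ℝ) (x : Fin m × Fin 2 → ℝ) (k : Fin m)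
    (s : Fin 2) : (blockRot φ *ᵥ x) (k, s) = (rot2 (φ k) *ᵥ fun t => x (k, t)) s := by
  simp only [blockRot, mulVec, dotProduct, Fintype.sum_prod_type]
  rw [sum_eq_single k (fun l _ hl => by simp [Ne.symm hl]) (by simp)]
  simp

noncomputable def blockCplx {m : ℕ} (v : Fin m × Fin 2 → ℝ) (k : Fin m) : ℂ :=
  ⟨v (k, 0), v (k, 1)⟩

section RopeGram

variable {m : ℕ} (θ : Fin m → ℝ) (u : ℕ → ℝ) (v : Fin m × Fin 2 → ℝ)

lemma ropeRankOne_apply {n : ℕ} (j : Fin n) (k : Fin m) (s : Fin 2) :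
    ropeRankOne θ u v j (k, s) =
      u (j + 1) * (coordWeight s * blockCplx v k * exp (θ k * I) ^ ((j : ℕ) + 1)).re := by
  rw [ropeRankOne, ropeRot, blockRot_mulVec_apply, rot2_mulVec_apply, ← exp_nat_mul]
  have hscale :
      (⟨u (j + 1) * v (k, 0), u (j + 1) * v (k, 1)⟩ : ℂ) = u (j + 1) * blockCplx v k :=
    Complex.ext (by simp [blockCplx]) (by simp [blockCplx])
  simp only [Pi.smul_apply, smul_eq_mul, hscale, ← re_ofReal_mul]
  push_cast
  ring_nf

lemma transpose_mul_self_ropeRankOne_apply {n : ℕ} (p q : Fin m × Fin 2) :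
    ((ropeRankOne (n := n) θ u v)ᵀ * ropeRankOne (n := n) θ u v) p q =
      ((coordWeight p.2 * blockCplx v p.1 * (coordWeight q.2 * blockCplx v q.1) *
          weightedPowSum (fun j => u j ^ 2) (exp (θ p.1 * I) * exp (θ q.1 * I)) n).re +
        (coordWeight p.2 * blockCplx v p.1 * conj (coordWeight q.2 * blockCplx v q.1) *
          weightedPowSum (fun j => u j ^ 2) (exp (θ p.1 * I) * conj (exp (θ q.1 * I))) n).re) /
        2 := by
  rw [← sum_mul_re_mul_re, mul_apply, ← Fin.sum_univ_eq_sum_range]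
  refine sum_congr rfl fun j _ => ?_
  rw [transpose_apply, ropeRankOne_apply, ropeRankOne_apply]
  ring

lemma isLittleO_gram_sub {C : ℝ} (hu : ∀ j, |u j| ≤ C)
    (hvar : Tendsto (fun n : ℕ => (∑ j ∈ Icc 1 (n - 1), |u (j + 1) ^ 2 - u j ^ 2|) / n)
      atTop (𝓝 0))
    (hsum : ∀ k l, exp (((θ k + θ l : ℝ) : ℂ) * I) ≠ 1)
    (hdiff : ∀ k l, k ≠ l → exp (((θ k - θ l : ℝ) : ℂ) * I) ≠ 1)
    (p q : Fin m × Fin 2) :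
    (fun n : ℕ => ((ropeRankOne (n := n) θ u v)ᵀ * ropeRankOne (n := n) θ u v) p q -
      (∑ j ∈ range n, u (j + 1) ^ 2) * diagonal (fun p => normSq (blockCplx v p.1) / 2) p q)
      =o[atTop] (fun n : ℕ => (n : ℝ)) := by
  have hu2 : ∀ j, |u j ^ 2| ≤ C ^ 2 := fun j => by
    rw [abs_pow]
    exact pow_le_pow_left₀ (abs_nonneg _) (hu j) 2
  have hosc : ∀ (c : ℂ) (φ : ℝ), exp (φ * I) ≠ 1 → (fun n : ℕ =>
      (c * weightedPowSum (fun j => u j ^ 2) (exp (φ * I)) n).re) =o[atTop]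
      (fun n : ℕ => (n : ℝ)) :=
    fun c φ hφ => isLittleO_re_const_mul
      (weightedPowSum_isLittleO hu2 hvar (norm_exp_ofReal_mul_I φ) hφ) c
  have hplus : ∀ k l, exp (θ k * I) * exp (θ l * I) = exp (↑(θ k + θ l) * I) :=
    fun k l => by rw [← exp_add]; push_cast; ring_nf
  have hminus : ∀ k l, exp (θ k * I) * conj (exp (θ l * I)) = exp (↑(θ k - θ l) * I) :=
    fun k l => by rw [← exp_conj, ← exp_add, map_mul, conj_ofReal, conj_I]; push_cast; ring_nf
  obtain ⟨k, s⟩ := p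
  obtain ⟨l, t⟩ := q
  simp only [transpose_mul_self_ropeRankOne_apply, hplus, hminus]
  by_cases hkl : k = l
  · subst hkl
    have hosc₁ := hosc (coordWeight s * blockCplx v k * (coordWeight t * blockCplx v k)) _
      (hsum k k)
    refine (hosc₁.const_mul_left (1 / 2)).congr_left fun n => ?_
    rw [sub_self, ofReal_zero, zero_mul, exp_zero, weightedPowSum_one, mul_comm _ (ofReal _),
      re_ofReal_mul, re_coordWeight_mul_conj, diagonal_apply]
    by_cases hst : s = t
    · simp only [hst, ↓reduceIte]
      ring
    · simp only [hst, Prod.mk.injEq, true_and, if_false, mul_zero]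
      ring
  · have hne : (k, s) ≠ (l, t) := fun h => hkl (congrArg Prod.fst h)
    have hosc₁ := hosc (coordWeight s * blockCplx v k * (coordWeight t * blockCplx v l)) _
      (hsum k l)
    have hosc₂ := hosc (coordWeight s * blockCplx v k * conj (coordWeight t * blockCplx v l)) _
      (hdiff k l hkl)
    refine ((hosc₁.add hosc₂).const_mul_left (1 / 2)).congr_left fun n => ?_
    rw [diagonal_apply_ne _ hne, mul_zero, sub_zero]
    ring

lemma tendsto_inv_sum_sq_smul_gram {c₁ C : ℝ} (hc₁ : 0 < c₁)
    (hu : ∀ j, c₁ ≤ |u j| ∧ |u j| ≤ C)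
    (hvar : Tendsto (fun n : ℕ => (∑ j ∈ Icc 1 (n - 1), |u (j + 1) ^ 2 - u j ^ 2|) / n)
      atTop (𝓝 0))
    (hsum : ∀ k l, exp (((θ k + θ l : ℝ) : ℂ) * I) ≠ 1)
    (hdiff : ∀ k l, k ≠ l → exp (((θ k - θ l : ℝ) : ℂ) * I) ≠ 1) :
    Tendsto (fun n : ℕ => (∑ j ∈ range n, u (j + 1) ^ 2)⁻¹ •
        ((ropeRankOne (n := n) θ u v)ᵀ * ropeRankOne (n := n) θ u v))
      atTop (𝓝 (diagonal fun p => normSq (blockCplx v p.1) / 2)) := by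
  have hlower : ∀ n : ℕ, c₁ ^ 2 * n ≤ ∑ j ∈ range n, u (j + 1) ^ 2 := fun n => by
    simpa [mul_comm] using card_nsmul_le_sum (range n) (fun j => u (j + 1) ^ 2) (c₁ ^ 2)
      fun j _ => by simpa [sq_abs] using pow_le_pow_left₀ hc₁.le (hu (j + 1)).1 2
  have hpos : ∀ n : ℕ, 1 ≤ n → 0 < ∑ j ∈ range n, u (j + 1) ^ 2 := fun n hn =>
    lt_of_lt_of_le (by positivity) (hlower n)
  have hbigO : (fun n : ℕ => (n : ℝ)) =O[atTop] (fun n : ℕ => ∑ j ∈ range n, u (j + 1) ^ 2) :=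
    isBigO_of_le' (c := (c₁ ^ 2)⁻¹) _ fun n => by
      rw [Real.norm_natCast, Real.norm_of_nonneg (by nlinarith [hlower n]),
        le_inv_mul_iff₀ (by positivity)]
      exact hlower n
  refine tendsto_pi_nhds.2 fun p => tendsto_pi_nhds.2 fun q => ?_
  have h := (((isLittleO_gram_sub θ u v (fun j => (hu j).2) hvar hsum hdiff p q).trans_isBigO
    hbigO).tendsto_div_nhds_zero).add_const (diagonal (fun p => normSq (blockCplx v p.1) / 2) p q)
  rw [zero_add] at h
  refine h.congr' ((eventually_ge_atTop 1).mono fun n hn => ?_)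
  dsimp only
  rw [Matrix.smul_apply, smul_eq_mul, sub_div, mul_div_cancel_left₀ _ (hpos n hn).ne']
  ring

lemma specNorm_ropeRankOne_div {n : ℕ} (hv : eNorm v = 1) :
    specNorm (ropeRankOne (n := n) θ u v) / specNorm (vecMulVec (fun j : Fin n => u (j + 1)) v) =
      √‖(∑ j ∈ range n, u (j + 1) ^ 2)⁻¹ •
        ((ropeRankOne (n := n) θ u v)ᵀ * ropeRankOne (n := n) θ u v)‖ := by
  have hS : 0 ≤ ∑ j ∈ range n, u (j + 1) ^ 2 := sum_nonneg fun j _ => sq_nonneg _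
  rw [specNorm_eq_l2_opNorm, specNorm_eq_l2_opNorm, l2_opNorm_vecMulVec, ← eNorm_eq_norm_toLp,
    ← eNorm_eq_norm_toLp, hv, mul_one, eNorm, Fin.sum_univ_eq_sum_range (fun j => u (j + 1) ^ 2),
    l2_opNorm_eq_sqrt_norm_transpose_mul_self, ← Real.sqrt_div' _ hS, norm_smul, norm_inv,
    Real.norm_of_nonneg hS, inv_mul_eq_div]

end RopeGram

lemma sqrt_norm_normSq_blockCplx_div_two {m : ℕ} (v : Fin (m + 1) × Fin 2 → ℝ) :
    √‖fun p : Fin (m + 1) × Fin 2 => normSq (blockCplx v p.1) / 2‖ =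
      1 / √2 * ⨆ k : Fin (m + 1), √(v (k, 0) ^ 2 + v (k, 1) ^ 2) := by
  set M := ⨆ k : Fin (m + 1), √(v (k, 0) ^ 2 + v (k, 1) ^ 2)
  have hα : ∀ k, √(v (k, 0) ^ 2 + v (k, 1) ^ 2) = ‖blockCplx v k‖ := fun k => by
    simp [Complex.norm_def, normSq_mk, blockCplx, sq]
  have hle : ∀ k, ‖blockCplx v k‖ ≤ M := fun k =>
    (hα k).symm.trans_le (le_ciSup (f := fun k : Fin (m + 1) => √(v (k, 0) ^ 2 + v (k, 1) ^ 2))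
      (Set.finite_range _).bddAbove k)
  obtain ⟨k₀, hk₀⟩ := exists_eq_ciSup_of_finite
    (f := fun k : Fin (m + 1) => √(v (k, 0) ^ 2 + v (k, 1) ^ 2))
  have hM : M = ‖blockCplx v k₀‖ := hk₀.symm.trans (hα k₀)
  have hnorm : ‖fun p : Fin (m + 1) × Fin 2 => normSq (blockCplx v p.1) / 2‖ = M ^ 2 / 2 := by
    refine le_antisymm ((pi_norm_le_iff_of_nonneg (by positivity)).2 fun p => ?_) ?_
    · rw [normSq_eq_norm_sq, Real.norm_of_nonneg (by positivity)]
      gcongr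
      exact hle p.1
    · refine le_trans ?_ (norm_le_pi_norm _ (k₀, 0))
      rw [hM, normSq_eq_norm_sq, Real.norm_of_nonneg (by positivity)]
  rw [hnorm, Real.sqrt_div' _ zero_le_two, Real.sqrt_sq (hM ▸ norm_nonneg _)]
  ring

/-- Asymptotics of the spectral norm ratio under RoPE: for `X = u vᵀ` with
`‖v‖ = 1`, `u_j = Θ(1)`, sublinear total variation of `u_j²`, and all angles
`θ_k` and `(θ_k ± θ_l)/2` irrational multiples of `π`,
`‖R(X)‖₂ / ‖X‖₂ → (1/√2) max_k α_k`. -/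
theorem spectral_norm_ratio_limit (m : ℕ) (θ : Fin (m + 1) → ℝ)
    (v : Fin (m + 1) × Fin 2 → ℝ) (hv : eNorm v = 1)
    (u : ℕ → ℝ) (c₁ c₂ : ℝ) (hc₁ : 0 < c₁)
    (hu : ∀ j : ℕ, c₁ ≤ |u j| ∧ |u j| ≤ c₂)
    (hTV : Tendsto
      (fun n : ℕ => (∑ j ∈ Finset.Icc 1 (n - 1), |u (j + 1) ^ 2 - u j ^ 2|) / n)
      atTop (nhds 0))
    (hirr : ∀ k, Irrational (θ k / Real.pi))
    (hirr' : ∀ k l, k ≠ l →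
      Irrational (((θ k + θ l) / 2) / Real.pi) ∧
      Irrational (((θ k - θ l) / 2) / Real.pi)) :
    Tendsto
      (fun n : ℕ =>
        specNorm (ropeRankOne (n := n) θ u v) /
          specNorm (Matrix.vecMulVec (fun j : Fin n => u ((j : ℕ) + 1)) v))
      atTop
      (nhds ((1 / Real.sqrt 2) *
        ⨆ k : Fin (m + 1), Real.sqrt ((v (k, 0)) ^ 2 + (v (k, 1)) ^ 2))) := by
  have hsum : ∀ k l, exp (((θ k + θ l : ℝ) : ℂ) * I) ≠ 1 := fun k l => by
    by_cases hkl : k = l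
    · subst hkl
      exact exp_mul_I_ne_one_of_irrational (by rw [add_self_div_two]; exact hirr k)
    · exact exp_mul_I_ne_one_of_irrational (hirr' k l hkl).1
  have hdiff : ∀ k l, k ≠ l → exp (((θ k - θ l : ℝ) : ℂ) * I) ≠ 1 := fun k l hkl =>
    exp_mul_I_ne_one_of_irrational (hirr' k l hkl).2
  have hlim := (tendsto_inv_sum_sq_smul_gram θ u v hc₁ hu hTV hsum hdiff).norm.sqrt
  rw [l2_opNorm_diagonal, sqrt_norm_normSq_blockCplx_div_two] at hlim
  exact hlim.congr fun n => (specNorm_ropeRankOne_div θ u v hv).symm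
end
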